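/- Define m_{2n} = -((4n+1)/2) ∫_{-1}^{1} P_{2n}(t) |t|^β dt for real β > -1. Then m_{2n} = -(4n+1)·sqrt(π)·2^{-β-1} · ( Γ(1+β) / ( Γ(1+β/2) Γ(3/2+β/2) ) ) · ( ∏_{k=0}^{n-1} (β/2 - k) ) / ( ∏_{k=0}^{n-1} (β/2 + 3/2 + k) ). -/

import Mathlib

/-!
Since `P_{2n}` is even, the integral is twice the moment `M_l(p) = ∫₀¹ p(x) x^l dx` of `P_{2n}` at
`l = β`. Integrating `(x^{l+1} P_{n+1})'` over `[0, 1]`, and using `P_{n+1}' = x P_n' + (n+1) P_n`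
(from Rodrigues' formula) and `P_n(1) = 1`, gives `(l+1) M_l(P_{n+1}) = (l+1-n) M_{l+1}(P_n)`.
Two steps of this recursion determine `M_l(P_{2n})` by induction on `n`. Finally, the duplication
formula `Γ(s) Γ(s + 1/2) = 2^{1-2s} √π Γ(2s)` at `s = 1 + β/2` shows that the Gamma prefactor
`√π 2^{-β-1} Γ(1+β) / (Γ(1+β/2) Γ(3/2+β/2))` equals `1 / (β+1)`.
-/

open Polynomial Real Finset

/-- The `n`-th Legendre polynomial via Rodrigues' formula. -/
noncomputable def legendre (n : ℕ) : Polynomial ℝ :=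
  Polynomial.C (1 / (2 ^ n * n.factorial : ℝ)) * derivative^[n] ((X ^ 2 - 1) ^ n)

open MeasureTheory

theorem Polynomial.iterate_derivative_comp_neg_X {R : Type*} [CommRing R] (p : R[X]) (k : ℕ) :
    derivative^[k] (p.comp (-X)) = (-1) ^ k * (derivative^[k] p).comp (-X) := by
  induction k generalizing p with
  | zero => simp
  | succ k ih => simp [ih (derivative p), derivative_comp, pow_succ]

theorem Polynomial.eval_iterate_derivative_X_sub_C_pow_mul {R : Type*} [CommRing R]
    (n : ℕ) (t : R) (q : R[X]) :
    (derivative^[n] ((X - C t) ^ n * q)).eval t = n.factorial * q.eval t := by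
  rw [iterate_derivative_mul, eval_finsetSum, sum_eq_single_of_mem _ (mem_range.mpr n.succ_pos)]
  · simp [iterate_derivative_X_sub_pow_self]
  · intro k hk hk0
    rw [iterate_derivative_X_sub_pow, Nat.sub_sub_self (mem_range_succ_iff.mp hk)]
    simp [zero_pow hk0]

theorem derivative_legendre_succ (n : ℕ) :
    derivative (legendre (n + 1)) = X * derivative (legendre n) + C ((n : ℝ) + 1) * legendre n := by
  have hQ : derivative ((X ^ 2 - 1 : ℝ[X]) ^ (n + 1)) =
      C (2 * ((n : ℝ) + 1)) * ((X ^ 2 - 1) ^ n * X) := by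
    simp [derivative_pow, map_natCast]
    ring
  have hc : (1 / (2 ^ (n + 1) * (n + 1).factorial : ℝ)) * (2 * ((n : ℝ) + 1))
      = 1 / (2 ^ n * n.factorial) := by
    rw [Nat.factorial_succ]
    push_cast
    field_simp
    ring
  rw [legendre, legendre, derivative_C_mul, derivative_C_mul,
    ← Function.iterate_succ_apply' derivative (n + 1), Function.iterate_succ_apply, hQ,
    iterate_derivative_C_mul, iterate_derivative_mul_X,
    ← Function.iterate_succ_apply' derivative n, ← mul_assoc, ← C_mul, hc]
  simp only [Nat.add_sub_cancel, nsmul_eq_mul, map_add, map_natCast, map_one]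
  push_cast
  ring

theorem legendre_comp_neg_X (n : ℕ) : (legendre n).comp (-X) = (-1) ^ n * legendre n := by
  set q : ℝ[X] := derivative^[n] ((X ^ 2 - 1) ^ n)
  have hq : q = (-1) ^ n * q.comp (-X) := by
    have heven : ((X ^ 2 - 1 : ℝ[X]) ^ n).comp (-X) = (X ^ 2 - 1) ^ n := by
      rw [pow_comp, sub_comp, pow_comp, X_comp, one_comp, neg_sq]
    rw [← iterate_derivative_comp_neg_X, heven]
  have hq' : q.comp (-X) = (-1) ^ n * q := by
    conv_rhs => rw [hq]
    rw [← mul_assoc, ← mul_pow]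
    simp
  rw [legendre, mul_comp, C_comp, hq']
  ring

theorem legendre_eval_neg (n : ℕ) (t : ℝ) :
    (legendre n).eval (-t) = (-1) ^ n * (legendre n).eval t := by
  simpa using congrArg (eval t) (legendre_comp_neg_X n)

theorem legendre_eval_one (n : ℕ) : (legendre n).eval 1 = 1 := by
  have hfactor : (X ^ 2 - 1 : ℝ[X]) ^ n = (X - C 1) ^ n * (X + 1) ^ n := by
    rw [← mul_pow, C_1]; ring
  rw [legendre, eval_mul, eval_C, hfactor, eval_iterate_derivative_X_sub_C_pow_mul]
  simp only [eval_pow, eval_add, eval_X, eval_one]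
  field_simp
  norm_num

theorem intervalIntegral.integral_symmetric_eq_two_smul_of_even {E : Type*} [NormedAddCommGroup E]
    [NormedSpace ℝ E] {f : ℝ → E} (hf : Function.Even f) (a : ℝ) :
    ∫ x in -a..a, f x = (2 : ℝ) • ∫ x in 0..a, f x := by
  have hf' : (fun x ↦ f (-x)) = f := funext hf
  by_cases hint : IntervalIntegrable f volume 0 a
  · have hint' : IntervalIntegrable f volume (-a) 0 := by
      rw [IntervalIntegrable.iff_comp_neg, hf', neg_neg, neg_zero]
      exact hint.symm
    have hleft : ∫ x in -a..0, f x = ∫ x in 0..a, f x := by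
      simpa [hf'] using (integral_comp_neg (a := -a) (b := 0) f)
    rw [← integral_add_adjacent_intervals hint' hint, hleft, two_smul]
  · have hint' : ¬ IntervalIntegrable f volume (-a) a := fun h ↦ hint <| h.mono_set <|
      Set.uIcc_subset_uIcc (by rcases le_total 0 a with h | h <;> simp [h])
        Set.right_mem_uIcc
    rw [integral_undef hint, integral_undef hint', smul_zero]

noncomputable def rpowMoment (l : ℝ) (p : ℝ[X]) : ℝ := ∫ x in (0 : ℝ)..1, p.eval x * x ^ l

theorem intervalIntegrable_eval_mul_rpow (p : ℝ[X]) {l : ℝ} (hl : -1 < l) :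
    IntervalIntegrable (fun x ↦ p.eval x * x ^ l) volume 0 1 :=
  (intervalIntegral.intervalIntegrable_rpow' hl).continuousOn_mul p.continuous.continuousOn

theorem rpowMoment_add {l : ℝ} (hl : -1 < l) (p q : ℝ[X]) :
    rpowMoment l (p + q) = rpowMoment l p + rpowMoment l q := by
  simp only [rpowMoment, eval_add, add_mul]
  exact intervalIntegral.integral_add (intervalIntegrable_eval_mul_rpow p hl)
    (intervalIntegrable_eval_mul_rpow q hl)

theorem rpowMoment_C_mul (l c : ℝ) (p : ℝ[X]) : rpowMoment l (C c * p) = c * rpowMoment l p := by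
  simp only [rpowMoment, eval_mul, eval_C, mul_assoc, intervalIntegral.integral_const_mul]

theorem rpowMoment_X_mul (l : ℝ) (p : ℝ[X]) : rpowMoment l (X * p) = rpowMoment (l + 1) p := by
  refine intervalIntegral.integral_congr_ae (Filter.Eventually.of_forall fun x hx ↦ ?_)
  rw [Set.uIoc_of_le zero_le_one] at hx
  simp only [eval_mul, eval_X, rpow_add_one hx.1.ne']
  ring

theorem rpowMoment_derivative {l : ℝ} (hl : -1 < l) (p : ℝ[X]) :
    (l + 1) * rpowMoment l p + rpowMoment (l + 1) (derivative p) = p.eval 1 := by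
  have hl1 : 0 < l + 1 := by linarith
  have hderiv : ∀ x ∈ Set.Ioo (0 : ℝ) 1, HasDerivAt (fun x ↦ p.eval x * x ^ (l + 1))
      ((l + 1) * (p.eval x * x ^ l) + (derivative p).eval x * x ^ (l + 1)) x := fun x hx ↦ by
    have hpow : HasDerivAt (fun x ↦ x ^ (l + 1)) ((l + 1) * x ^ l) x := by
      simpa using hasDerivAt_rpow_const (p := l + 1) (Or.inl hx.1.ne')
    exact ((p.hasDerivAt x).mul hpow).congr_deriv (by ring)
  have hcont : ContinuousOn (fun x ↦ p.eval x * x ^ (l + 1)) (Set.Icc 0 1) :=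
    p.continuous.continuousOn.mul (continuousOn_id.rpow_const fun _ _ ↦ Or.inr hl1.le)
  have hint1 := intervalIntegrable_eval_mul_rpow p hl
  have hint2 := intervalIntegrable_eval_mul_rpow (derivative p) (by linarith : -1 < l + 1)
  have hftc := intervalIntegral.integral_eq_sub_of_hasDerivAt_of_le zero_le_one hcont hderiv
    ((hint1.const_mul (l + 1)).add hint2)
  rw [intervalIntegral.integral_add (hint1.const_mul (l + 1)) hint2,
    intervalIntegral.integral_const_mul, one_rpow, zero_rpow hl1.ne', mul_zero, sub_zero,
    mul_one] at hftc
  exact hftc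

theorem rpowMoment_legendre_succ (n : ℕ) {l : ℝ} (hl : -1 < l) :
    (l + 1) * rpowMoment l (legendre (n + 1)) = (l + 1 - n) * rpowMoment (l + 1) (legendre n) := by
  have hsucc := rpowMoment_derivative hl (legendre (n + 1))
  have hprev := rpowMoment_derivative (by linarith : -1 < l + 1) (legendre n)
  rw [derivative_legendre_succ, rpowMoment_add (by linarith), rpowMoment_X_mul,
    rpowMoment_C_mul] at hsucc
  rw [legendre_eval_one] at hsucc hprev
  linear_combination hsucc - hprev

theorem rpowMoment_legendre_add_two (m : ℕ) {l : ℝ} (hl : -1 < l) :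
    (l + 1) * (l + 2) * rpowMoment l (legendre (m + 2)) =
      (l - m) * (l + 2 - m) * rpowMoment (l + 2) (legendre m) := by
  have hstep₁ := rpowMoment_legendre_succ (m + 1) hl
  have hstep₂ := rpowMoment_legendre_succ m (by linarith : -1 < l + 1)
  rw [show l + 1 + 1 = l + 2 by ring] at hstep₂
  push_cast at hstep₁
  linear_combination (l + 2) * hstep₁ + (l - m) * hstep₂

theorem rpowMoment_legendre_two_mul (n : ℕ) {l : ℝ} (hl : -1 < l) :
    rpowMoment l (legendre (2 * n)) =
      (∏ k ∈ range n, (l / 2 - k)) / ((l + 1) * ∏ k ∈ range n, (l / 2 + 3 / 2 + k)) := by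
  induction n generalizing l with
  | zero =>
    have hl1 : l + 1 ≠ 0 := by linarith
    simp [rpowMoment, legendre, integral_rpow (Or.inl hl), zero_rpow hl1]
  | succ n ih =>
    have hrec := rpowMoment_legendre_add_two (2 * n) hl
    rw [ih (by linarith : -1 < l + 2)] at hrec
    set N := ∏ k ∈ range n, ((l + 2) / 2 - k)
    set D := ∏ k ∈ range n, ((l + 2) / 2 + 3 / 2 + k)
    have hD : 0 < D := prod_pos fun k _ ↦ by have := k.cast_nonneg (α := ℝ); linarith
    have hrec' : (l + 1) * (l + 2) * rpowMoment l (legendre (2 * n + 2)) * ((l + 3) * D) =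
        (l - 2 * n) * (l + 2 - 2 * n) * N := by
      have : l + 2 + 1 ≠ 0 := by linarith
      push_cast at hrec
      rw [hrec]
      field_simp
      ring
    have hnum : (∏ k ∈ range (n + 1), (l / 2 - k)) * (l / 2 + 1) =
        N * ((l + 2) / 2 - n) * ((l + 2) / 2 - (n + 1)) := by
      have h := prod_range_succ' (fun k : ℕ ↦ (l + 2) / 2 - k) (n + 1)
      rw [prod_range_succ, prod_range_succ] at h
      push_cast at h
      rw [h]
      congr 1
      · exact prod_congr rfl fun k _ ↦ by ring
      · ring
    have hden : ∏ k ∈ range (n + 1), (l / 2 + 3 / 2 + k) = D * (l / 2 + 3 / 2) := by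
      rw [prod_range_succ']
      push_cast
      congr 1
      · exact prod_congr rfl fun k _ ↦ by ring
      · ring
    have hl1 : 0 < l + 1 := by linarith
    have hl3 : 0 < l / 2 + 3 / 2 := by linarith
    rw [show 2 * (n + 1) = 2 * n + 2 by ring, hden, eq_div_iff (by positivity)]
    apply mul_left_cancel₀ (show l / 2 + 1 ≠ 0 by linarith)
    linear_combination hrec' / 4 - hnum

theorem sqrt_pi_mul_two_rpow_mul_Gamma_div_Gamma_mul_Gamma {β : ℝ} (hβ : -1 < β) :
    √π * (2 : ℝ) ^ (-β - 1) * (Gamma (1 + β) / (Gamma (1 + β / 2) * Gamma (3 / 2 + β / 2)))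
      = 1 / (β + 1) := by
  have hdup := Gamma_mul_Gamma_add_half (1 + β / 2)
  rw [show 1 + β / 2 + 1 / 2 = 3 / 2 + β / 2 by ring, show 1 - 2 * (1 + β / 2) = -β - 1 by ring,
    show 2 * (1 + β / 2) = (1 + β) + 1 by ring, Gamma_add_one (by linarith)] at hdup
  have hΓ : Gamma (1 + β) ≠ 0 := (Gamma_pos_of_pos (by linarith)).ne'
  rw [hdup]
  field_simp
  ring

theorem integral_eval_legendre_two_mul_mul_abs_rpow (n : ℕ) (β : ℝ) :
    ∫ t in (-1 : ℝ)..1, (legendre (2 * n)).eval t * |t| ^ β =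
      2 * rpowMoment β (legendre (2 * n)) := by
  rw [intervalIntegral.integral_symmetric_eq_two_smul_of_even
    (fun t ↦ by rw [legendre_eval_neg, abs_neg, pow_mul, neg_one_sq, one_pow, one_mul]),
    smul_eq_mul, rpowMoment]
  congr 1
  refine intervalIntegral.integral_congr fun t ht ↦ ?_
  rw [Set.uIcc_of_le zero_le_one] at ht
  rw [abs_of_nonneg ht.1]

/-- The Legendre coefficients of `|t|^β`:
`m_{2n} = -((4n+1)/2) ∫_{-1}^1 P_{2n}(t) |t|^β dt`
`      = -(4n+1) √π 2^{-β-1} (Γ(1+β)/(Γ(1+β/2)Γ(3/2+β/2))) ∏(β/2-k)/∏(β/2+3/2+k)`. -/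
theorem legendre_coeff_abs_rpow (n : ℕ) (β : ℝ) (hβ : -1 < β) :
    -(((4 * n + 1 : ℝ)) / 2) * ∫ t in (-1 : ℝ)..1, (legendre (2 * n)).eval t * |t| ^ β
      = -(4 * n + 1 : ℝ) * Real.sqrt π * (2 : ℝ) ^ (-β - 1) *
        (Real.Gamma (1 + β) / (Real.Gamma (1 + β / 2) * Real.Gamma (3 / 2 + β / 2))) *
        (∏ k ∈ Finset.range n, (β / 2 - k)) / (∏ k ∈ Finset.range n, (β / 2 + 3 / 2 + k)) := by
  have hD : 0 < ∏ k ∈ range n, (β / 2 + 3 / 2 + k) :=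
    prod_pos fun k _ ↦ by have := k.cast_nonneg (α := ℝ); linarith
  have hβ1 : β + 1 ≠ 0 := by linarith
  rw [integral_eval_legendre_two_mul_mul_abs_rpow, rpowMoment_legendre_two_mul n hβ,
    mul_assoc _ (√π), mul_assoc _ (√π * _), sqrt_pi_mul_two_rpow_mul_Gamma_div_Gamma_mul_Gamma hβ]
  field_simp
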